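/- arXiv:2407.12369 — 3 statements merged into one kernel-verified Lean document; each statement's English description precedes it below -/
import Mathlib

section
/- For every real ν and every real x > 0, the Bessel function of the first kind satisfies |J_ν(x)| ≤ c_ν · x^ν · (1+x)^{-ν-1/2} for some constant c_ν depending only on ν. -/
/-!
On `(0, 1]` the bound is the trivial estimate of a power series: `J_ν(x) = (x/2)^ν G((x/2)²)`
with `G` entire, hence bounded on `[-1, 1]`. On `[1, ∞)` one uses Bessel's equation in normal
form: `u(x) = x^(ν+1/2) G((x/2)²)` solves `u'' + u = (ν² - 1/4) x⁻² u`, so the energy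
`(u² + u'²) exp(|ν² - 1/4| / x)` is nonincreasing, `u` is bounded and `|J_ν(x)| ≲ x^(-1/2)`.
Finally `x^ν (1+x)^(-ν-1/2)` is comparable to `x^ν` on `(0, 1]` and to `x^(-1/2)` on `[1, ∞)`.
-/

open Real

/-- The Bessel function of the first kind of real order `ν`, defined by its
standard power series `J_ν(x) = Σ_{m≥0} (-1)^m / (m! Γ(m+ν+1)) (x/2)^{2m+ν}`. -/
noncomputable def besselJ (ν : ℝ) (x : ℝ) : ℝ :=
  ∑' m : ℕ, ((-1 : ℝ) ^ m / ((m.factorial : ℝ) * Real.Gamma (m + ν + 1))) *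
    (x / 2) ^ (2 * m) * (x / 2) ^ ν

open Set Filter

noncomputable def powerSeriesSum (a : ℕ → ℝ) (t : ℝ) : ℝ := ∑' m, a m * t ^ m

def derivCoeff (a : ℕ → ℝ) (m : ℕ) : ℝ := (m + 1) * a (m + 1)

lemma succ_mul_pow_le_pow_succ (k : ℕ) {s : ℝ} (hs : 0 ≤ s) :
    (k + 1) * s ^ k ≤ (2 * s + 1) ^ (k + 1) := by
  have hk : (k + 1 : ℝ) ≤ 2 ^ k := by exact_mod_cast Nat.lt_two_pow_self
  calc (k + 1) * s ^ k ≤ 2 ^ k * s ^ k := by gcongr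
    _ = (2 * s) ^ k := (mul_pow _ _ _).symm
    _ ≤ (2 * s + 1) ^ k := by gcongr; linarith
    _ ≤ (2 * s + 1) ^ (k + 1) := pow_le_pow_right₀ (by linarith) k.le_succ

section PowerSeries

variable {a : ℕ → ℝ}

lemma summable_mul_pow (ha : ∀ r, Summable fun m ↦ |a m| * r ^ m) (t : ℝ) :
    Summable fun m ↦ a m * t ^ m :=
  .of_norm_bounded (ha |t|) fun m ↦ by rw [norm_mul, norm_pow, Real.norm_eq_abs, Real.norm_eq_abs]

lemma summable_abs_derivCoeff_mul_pow (ha : ∀ r, Summable fun m ↦ |a m| * r ^ m) (r : ℝ) :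
    Summable fun m ↦ |derivCoeff a m| * r ^ m := by
  refine .of_norm_bounded ((summable_nat_add_iff 1).mpr (ha (2 * |r| + 1))) fun m ↦ ?_
  rw [norm_mul, norm_pow, Real.norm_eq_abs, Real.norm_eq_abs, abs_abs, derivCoeff, abs_mul,
    abs_of_nonneg (by positivity : (0 : ℝ) ≤ m + 1)]
  calc (m + 1) * |a (m + 1)| * |r| ^ m = |a (m + 1)| * ((m + 1) * |r| ^ m) := by ring
    _ ≤ |a (m + 1)| * (2 * |r| + 1) ^ (m + 1) := by
      gcongr; exact succ_mul_pow_le_pow_succ m (abs_nonneg r)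

lemma hasDerivAt_powerSeriesSum (ha : ∀ r, Summable fun m ↦ |a m| * r ^ m) (t : ℝ) :
    HasDerivAt (powerSeriesSum a) (powerSeriesSum (derivCoeff a) t) t := by
  have hshift : powerSeriesSum a = fun s ↦ a 0 + ∑' m, a (m + 1) * s ^ (m + 1) := by
    funext s
    simpa [powerSeriesSum] using (summable_mul_pow ha s).tsum_eq_zero_add
  rw [hshift]
  refine HasDerivAt.const_add _ <| hasDerivAt_tsum_of_isPreconnected
    (g := fun m s ↦ a (m + 1) * s ^ (m + 1)) (g' := fun m s ↦ derivCoeff a m * s ^ m)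
    (t := Ioo (-(|t| + 1)) (|t| + 1))
    (summable_abs_derivCoeff_mul_pow ha (|t| + 1)) isOpen_Ioo (convex_Ioo _ _).isPreconnected
    (fun m s _ ↦ ?_) (fun m s hs ↦ ?_) (y₀ := 0) ?_ ?_ ?_
  · simpa [derivCoeff, mul_comm, mul_left_comm, mul_assoc] using
      (hasDerivAt_pow (m + 1) s).const_mul (a (m + 1))
  · rw [norm_mul, norm_pow, Real.norm_eq_abs, Real.norm_eq_abs]
    gcongr
    exact abs_le.mpr ⟨by linarith [hs.1], by linarith [hs.2]⟩
  · exact ⟨by linarith [abs_nonneg t], by linarith [abs_nonneg t]⟩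
  · simp
  · exact ⟨by linarith [neg_abs_le t], by linarith [le_abs_self t]⟩

lemma hasDerivAt_powerSeriesSum_half_sq (ha : ∀ r, Summable fun m ↦ |a m| * r ^ m)
    (x : ℝ) : HasDerivAt (fun x ↦ powerSeriesSum a ((x / 2) ^ 2))
      (x / 2 * powerSeriesSum (derivCoeff a) ((x / 2) ^ 2)) x := by
  have hsq : HasDerivAt (fun x : ℝ ↦ (x / 2) ^ 2) (x / 2) x := by
    refine (((hasDerivAt_id x).div_const 2).fun_pow 2).congr_deriv ?_
    simp only [id]; ring
  exact ((hasDerivAt_powerSeriesSum ha _).comp x hsq).congr_deriv (mul_comm _ _)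

lemma mul_powerSeriesSum_derivCoeff (ha : ∀ r, Summable fun m ↦ |a m| * r ^ m) (t : ℝ) :
    t * powerSeriesSum (derivCoeff a) t = powerSeriesSum (fun m ↦ m * a m) t := by
  have hsum : Summable fun m ↦ derivCoeff a m * t ^ m :=
    summable_mul_pow (summable_abs_derivCoeff_mul_pow ha) t
  rw [powerSeriesSum, powerSeriesSum, tsum_eq_zero_add' (f := fun m : ℕ ↦ m * a m * t ^ m) ?_,
    ← tsum_mul_left]
  · simp only [derivCoeff, CharP.cast_eq_zero, zero_mul, zero_add, Nat.cast_succ]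
    exact tsum_congr fun m ↦ by ring
  · simpa [derivCoeff, pow_succ, mul_comm, mul_left_comm, mul_assoc] using hsum.mul_left t

lemma abs_powerSeriesSum_le (ha : Summable fun m ↦ |a m|) {t : ℝ} (ht : |t| ≤ 1) :
    |powerSeriesSum a t| ≤ ∑' m, |a m| := by
  have hle : ∀ m, ‖a m * t ^ m‖ ≤ |a m| := fun m ↦ by
    rw [norm_mul, norm_pow, Real.norm_eq_abs, Real.norm_eq_abs]
    exact mul_le_of_le_one_right (abs_nonneg _) (pow_le_one₀ (abs_nonneg t) ht)
  exact (norm_tsum_le_tsum_norm (.of_nonneg_of_le (fun _ ↦ norm_nonneg _) hle ha)).trans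
    (Summable.tsum_le_tsum hle (.of_nonneg_of_le (fun _ ↦ norm_nonneg _) hle ha) ha)

end PowerSeries

theorem sq_add_sq_le_mul_exp_of_hasDerivAt {y y' q : ℝ → ℝ} {a c : ℝ} (ha : 0 < a)
    (hy : ∀ x ∈ Ici a, HasDerivAt y (y' x) x)
    (hy' : ∀ x ∈ Ici a, HasDerivAt y' ((q x - 1) * y x) x)
    (hq : ∀ x ∈ Ici a, |q x| ≤ c / x ^ 2) {x : ℝ} (hx : a ≤ x) :
    y x ^ 2 + y' x ^ 2 ≤ (y a ^ 2 + y' a ^ 2) * exp (c / a - c / x) := by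
  set E : ℝ → ℝ := fun z ↦ y z ^ 2 + y' z ^ 2 with hE
  have hΦ (z : ℝ) (hz : z ∈ Ici a) : HasDerivAt (fun z ↦ E z * exp (c * z⁻¹))
      ((2 * q z * y z * y' z - E z * (c / z ^ 2)) * exp (c * z⁻¹)) z := by
    have hz0 : z ≠ 0 := (ha.trans_le hz).ne'
    refine ((((hy z hz).fun_pow 2).fun_add ((hy' z hz).fun_pow 2)).fun_mul
      (((hasDerivAt_inv hz0).const_mul c).exp)).congr_deriv ?_
    rw [hE]
    field_simp
    ring
  have hΦ_nonpos (z : ℝ) (hz : z ∈ Ici a) :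
      (2 * q z * y z * y' z - E z * (c / z ^ 2)) * exp (c * z⁻¹) ≤ 0 := by
    refine mul_nonpos_of_nonpos_of_nonneg (sub_nonpos.mpr ?_) (exp_pos _).le
    have hyy : 2 * |y z * y' z| ≤ E z := by
      rw [abs_mul]; nlinarith [sq_abs (y z), sq_abs (y' z), sq_nonneg (|y z| - |y' z|)]
    calc 2 * q z * y z * y' z ≤ |q z| * (2 * |y z * y' z|) := by
          rw [← abs_two, ← abs_mul, ← abs_mul]; exact (le_abs_self _).trans_eq (by ring_nf)
      _ ≤ c / z ^ 2 * E z :=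
        mul_le_mul (hq z hz) hyy (by positivity) ((abs_nonneg _).trans (hq z hz))
      _ = E z * (c / z ^ 2) := mul_comm _ _
  have hanti : AntitoneOn (fun z ↦ E z * exp (c * z⁻¹)) (Ici a) := by
    refine antitoneOn_of_hasDerivWithinAt_nonpos (convex_Ici a)
      (f' := fun z ↦ (2 * q z * y z * y' z - E z * (c / z ^ 2)) * exp (c * z⁻¹))
      (fun z hz ↦ (hΦ z hz).continuousAt.continuousWithinAt) (fun z hz ↦ ?_) (fun z hz ↦ ?_)
    all_goals rw [interior_Ici] at hz
    · exact (hΦ z (mem_Ici.mpr hz.out.le)).hasDerivWithinAt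
    · exact hΦ_nonpos z (mem_Ici.mpr hz.out.le)
  rw [exp_sub, mul_div_assoc', le_div_iff₀ (exp_pos _), div_eq_mul_inv, div_eq_mul_inv]
  exact hanti self_mem_Ici (mem_Ici.mpr hx) hx

/-- Unlike `Real.Gamma_add_one`, no `s ≠ 0` is needed: with `Γ 0 = 0` both sides vanish. -/
lemma Real.mul_inv_Gamma_add_one (s : ℝ) : s * (Gamma (s + 1))⁻¹ = (Gamma s)⁻¹ := by
  rcases eq_or_ne s 0 with rfl | hs
  · simp
  · rw [Gamma_add_one hs, mul_inv, ← mul_assoc, mul_inv_cancel₀ hs, one_mul]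

noncomputable def besselCoeff (ν : ℝ) (m : ℕ) : ℝ :=
  (-1 : ℝ) ^ m / ((m.factorial : ℝ) * Gamma (m + ν + 1))

section BesselCoeff

variable (ν : ℝ)

lemma besselCoeff_recurrence (m : ℕ) :
    (m + ν + 1) * derivCoeff (besselCoeff ν) m = -besselCoeff ν m := by
  have hfac : ((m + 1).factorial : ℝ) = (m + 1) * m.factorial := by
    push_cast [Nat.factorial_succ]; ring
  have harg : ((m + 1 : ℕ) : ℝ) + ν + 1 = (m + ν + 1) + 1 := by push_cast; ring
  simp only [derivCoeff, besselCoeff, hfac, harg, div_eq_mul_inv, mul_inv]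
  rw [← Real.mul_inv_Gamma_add_one (m + ν + 1)]
  field_simp
  ring

lemma summable_abs_besselCoeff_mul_pow (r : ℝ) :
    Summable fun m ↦ |besselCoeff ν m| * r ^ m := by
  refine summable_of_ratio_norm_eventually_le (r := 1 / 2) (by norm_num) ?_
  filter_upwards [tendsto_natCast_atTop_atTop.eventually_ge_atTop (|ν| + 2 * |r|)] with m hm
  have hrec : |besselCoeff ν m| = |m + ν + 1| * (m + 1) * |besselCoeff ν (m + 1)| := by
    rw [← abs_neg, ← besselCoeff_recurrence, derivCoeff, abs_mul, abs_mul,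
      abs_of_nonneg (by positivity : (0 : ℝ) ≤ m + 1), mul_assoc]
  have hr : |r| ≤ |m + ν + 1| * (m + 1) / 2 := by
    rw [abs_of_nonneg (a := (m : ℝ) + ν + 1) (by linarith [neg_abs_le ν, abs_nonneg r])]
    nlinarith [neg_abs_le ν, abs_nonneg r]
  simp only [norm_mul, norm_pow, Real.norm_eq_abs, abs_abs, pow_succ]
  rw [hrec]
  calc |besselCoeff ν (m + 1)| * (|r| ^ m * |r|)
      ≤ |besselCoeff ν (m + 1)| * (|r| ^ m * (|m + ν + 1| * (m + 1) / 2)) := by gcongr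
    _ = 1 / 2 * (|m + ν + 1| * (m + 1) * |besselCoeff ν (m + 1)| * |r| ^ m) := by ring

lemma powerSeriesSum_besselCoeff_ode (t : ℝ) :
    t * powerSeriesSum (derivCoeff (derivCoeff (besselCoeff ν))) t
      + (ν + 1) * powerSeriesSum (derivCoeff (besselCoeff ν)) t
      + powerSeriesSum (besselCoeff ν) t = 0 := by
  have hc := summable_abs_besselCoeff_mul_pow ν
  have hd := summable_abs_derivCoeff_mul_pow hc
  have hrec (m : ℕ) : m * derivCoeff (besselCoeff ν) m * t ^ m =
      -((ν + 1) * (derivCoeff (besselCoeff ν) m * t ^ m) + besselCoeff ν m * t ^ m) := by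
    linear_combination t ^ m * besselCoeff_recurrence ν m
  rw [mul_powerSeriesSum_derivCoeff hd, powerSeriesSum, tsum_congr hrec, tsum_neg,
    Summable.tsum_add ((summable_mul_pow hd t).mul_left _) (summable_mul_pow hc t), tsum_mul_left,
    powerSeriesSum, powerSeriesSum]
  ring

end BesselCoeff

/-- For `x > 0` this is `2 ^ ν * √x * J_ν(x)`. -/
noncomputable def besselNormalForm (ν x : ℝ) : ℝ :=
  x ^ (ν + 1 / 2) * powerSeriesSum (besselCoeff ν) ((x / 2) ^ 2)

noncomputable def besselNormalFormDeriv (ν x : ℝ) : ℝ :=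
  (ν + 1 / 2) * x ^ (ν - 1 / 2) * powerSeriesSum (besselCoeff ν) ((x / 2) ^ 2)
    + x ^ (ν + 1 / 2) * (x / 2 * powerSeriesSum (derivCoeff (besselCoeff ν)) ((x / 2) ^ 2))

section NormalForm

variable (ν : ℝ) {x : ℝ}

lemma hasDerivAt_besselNormalForm (hx : 0 < x) :
    HasDerivAt (besselNormalForm ν) (besselNormalFormDeriv ν x) x := by
  refine ((hasDerivAt_rpow_const (p := ν + 1 / 2) (Or.inl hx.ne')).fun_mul
    (hasDerivAt_powerSeriesSum_half_sq (summable_abs_besselCoeff_mul_pow ν) x)).congr_deriv ?_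
  rw [besselNormalFormDeriv, show ν + 1 / 2 - 1 = ν - 1 / 2 by ring]

lemma hasDerivAt_besselNormalFormDeriv (hx : 0 < x) :
    HasDerivAt (besselNormalFormDeriv ν)
      (((ν ^ 2 - 1 / 4) / x ^ 2 - 1) * besselNormalForm ν x) x := by
  have hc := summable_abs_besselCoeff_mul_pow ν
  have hG := hasDerivAt_powerSeriesSum_half_sq hc x
  have hG' := hasDerivAt_powerSeriesSum_half_sq (summable_abs_derivCoeff_mul_pow hc) x
  have hP := hasDerivAt_rpow_const (x := x) (p := ν + 1 / 2) (Or.inl hx.ne')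
  have hP' := hasDerivAt_rpow_const (x := x) (p := ν - 1 / 2) (Or.inl hx.ne')
  refine ((hP'.const_mul _).fun_mul hG).fun_add
    (hP.fun_mul (((hasDerivAt_id x).div_const 2).fun_mul hG')) |>.congr_deriv ?_
  have e1 : x ^ (ν - 1 / 2) = x ^ (ν + 1 / 2) / x := by
    rw [← rpow_sub_one hx.ne']; ring_nf
  have e2 : x ^ (ν - 1 / 2 - 1) = x ^ (ν + 1 / 2) / x ^ 2 := by
    rw [rpow_sub_one hx.ne', e1]; ring
  have e3 : x ^ (ν + 1 / 2 - 1) = x ^ (ν + 1 / 2) / x := by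
    rw [rpow_sub_one hx.ne']
  have hode := powerSeriesSum_besselCoeff_ode ν ((x / 2) ^ 2)
  rw [e1, e2, e3, besselNormalForm]
  generalize powerSeriesSum (besselCoeff ν) ((x / 2) ^ 2) = G at hode ⊢
  generalize powerSeriesSum (derivCoeff (besselCoeff ν)) ((x / 2) ^ 2) = G' at hode ⊢
  generalize powerSeriesSum (derivCoeff (derivCoeff (besselCoeff ν))) ((x / 2) ^ 2) = G''
    at hode ⊢
  simp only [id]
  field_simp
  linear_combination 16 * x ^ 2 * hode

end NormalForm

lemma besselJ_eq_two_rpow_mul (ν : ℝ) {x : ℝ} (hx : 0 ≤ x) :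
    besselJ ν x = 2 ^ (-ν) * x ^ ν * powerSeriesSum (besselCoeff ν) ((x / 2) ^ 2) := by
  have hrpow : (x / 2) ^ ν = 2 ^ (-ν) * x ^ ν := by
    rw [div_rpow hx zero_le_two, rpow_neg zero_le_two, div_eq_inv_mul]
  rw [besselJ, powerSeriesSum, ← hrpow, ← tsum_mul_left]
  exact tsum_congr fun m ↦ by rw [besselCoeff, ← pow_mul]; ring

lemma exists_abs_besselJ_le_rpow (ν : ℝ) :
    ∃ A, ∀ x, 0 < x → x ≤ 1 → |besselJ ν x| ≤ A * x ^ ν := by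
  have hc : Summable fun m ↦ |besselCoeff ν m| := by
    simpa using summable_abs_besselCoeff_mul_pow ν 1
  refine ⟨2 ^ (-ν) * ∑' m, |besselCoeff ν m|, fun x hx hx1 ↦ ?_⟩
  have ht : |(x / 2) ^ 2| ≤ 1 := by
    rw [abs_pow, abs_of_pos (by positivity)]
    exact pow_le_one₀ (by positivity) (by linarith)
  rw [besselJ_eq_two_rpow_mul ν hx.le, abs_mul, abs_of_nonneg (by positivity)]
  calc 2 ^ (-ν) * x ^ ν * |powerSeriesSum (besselCoeff ν) ((x / 2) ^ 2)|
      ≤ 2 ^ (-ν) * x ^ ν * ∑' m, |besselCoeff ν m| := by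
        gcongr; exact abs_powerSeriesSum_le hc ht
    _ = 2 ^ (-ν) * (∑' m, |besselCoeff ν m|) * x ^ ν := by ring

lemma exists_abs_besselJ_le_rpow_neg_half (ν : ℝ) :
    ∃ B, ∀ x, 1 ≤ x → |besselJ ν x| ≤ B * x ^ (-(1 / 2) : ℝ) := by
  set c := |ν ^ 2 - 1 / 4|
  set E := besselNormalForm ν 1 ^ 2 + besselNormalFormDeriv ν 1 ^ 2
  refine ⟨2 ^ (-ν) * √(E * exp c), fun x hx1 ↦ ?_⟩
  have hx : 0 < x := one_pos.trans_le hx1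
  have henergy := sq_add_sq_le_mul_exp_of_hasDerivAt (q := fun x ↦ (ν ^ 2 - 1 / 4) / x ^ 2)
    (c := c) one_pos (fun z hz ↦ hasDerivAt_besselNormalForm ν (one_pos.trans_le hz))
    (fun z hz ↦ hasDerivAt_besselNormalFormDeriv ν (one_pos.trans_le hz))
    (fun z _ ↦ by rw [abs_div, abs_of_nonneg (sq_nonneg z)]) hx1
  have hy : |besselNormalForm ν x| ≤ √(E * exp c) := by
    refine abs_le_sqrt (le_trans ?_ (henergy.trans ?_))
    · nlinarith [sq_nonneg (besselNormalFormDeriv ν x)]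
    · gcongr
      rw [div_one]; linarith [div_nonneg (abs_nonneg (ν ^ 2 - 1 / 4)) hx.le]
  have hJ : besselJ ν x = 2 ^ (-ν) * x ^ (-(1 / 2) : ℝ) * besselNormalForm ν x := by
    rw [besselJ_eq_two_rpow_mul ν hx.le, besselNormalForm, mul_assoc _ (x ^ (-(1 / 2) : ℝ)),
      ← mul_assoc (x ^ (-(1 / 2) : ℝ)), ← rpow_add hx]
    ring_nf
  rw [hJ, abs_mul, abs_mul, abs_of_pos (by positivity : (0 : ℝ) < 2 ^ (-ν)),
    abs_of_pos (by positivity : 0 < x ^ (-(1 / 2) : ℝ))]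
  calc 2 ^ (-ν) * x ^ (-(1 / 2) : ℝ) * |besselNormalForm ν x|
      ≤ 2 ^ (-ν) * x ^ (-(1 / 2) : ℝ) * √(E * exp c) := by gcongr
    _ = 2 ^ (-ν) * √(E * exp c) * x ^ (-(1 / 2) : ℝ) := by ring

lemma min_one_two_rpow_le_rpow (α : ℝ) {s : ℝ} (h1 : 1 ≤ s) (h2 : s ≤ 2) :
    min 1 ((2 : ℝ) ^ α) ≤ s ^ α := by
  rcases le_total 0 α with hα | hα
  · exact (min_le_left _ _).trans (one_le_rpow h1 hα)
  · exact (min_le_right _ _).trans (rpow_le_rpow_of_nonpos (by linarith) h2 hα)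

lemma rpow_mul_one_add_rpow_eq (ν : ℝ) {x : ℝ} (hx : 0 < x) :
    x ^ ν * (1 + x) ^ (-ν - 1 / 2) = x ^ (-(1 / 2) : ℝ) * ((1 + x) / x) ^ (-ν - 1 / 2) := by
  rw [div_rpow (by linarith) hx.le, rpow_sub hx, rpow_neg hx.le, rpow_neg hx.le]
  field_simp

/-- For every real `ν` and every `x > 0`,
`|J_ν(x)| ≤ c_ν · x^ν · (1+x)^{-ν-1/2}` for some constant `c_ν` depending only on `ν`. -/
theorem besselJ_bound (ν : ℝ) :
    ∃ c : ℝ, 0 < c ∧ ∀ x : ℝ, 0 < x →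
      |besselJ ν x| ≤ c * x ^ ν * (1 + x) ^ (-ν - 1/2) := by
  obtain ⟨A, hA⟩ := exists_abs_besselJ_le_rpow ν
  obtain ⟨B, hB⟩ := exists_abs_besselJ_le_rpow_neg_half ν
  set δ := min 1 ((2 : ℝ) ^ (-ν - 1 / 2))
  have hδ : 0 < δ := lt_min one_pos (rpow_pos_of_pos two_pos _)
  set C := max (max A B) 1
  refine ⟨C / δ, by positivity, fun x hx ↦ ?_⟩
  rcases le_total x 1 with hx1 | hx1
  · calc |besselJ ν x| ≤ A * x ^ ν := hA x hx hx1
      _ ≤ C * x ^ ν := by gcongr; exact (le_max_left _ _).trans (le_max_left _ _)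
      _ = C / δ * x ^ ν * δ := by field_simp
      _ ≤ C / δ * x ^ ν * (1 + x) ^ (-ν - 1 / 2) := by
        gcongr; exact min_one_two_rpow_le_rpow _ (by linarith) (by linarith)
  · rw [mul_assoc, rpow_mul_one_add_rpow_eq ν hx]
    calc |besselJ ν x| ≤ B * x ^ (-(1 / 2) : ℝ) := hB x hx1
      _ ≤ C * x ^ (-(1 / 2) : ℝ) := by gcongr; exact (le_max_right _ _).trans (le_max_left _ _)
      _ = C / δ * (x ^ (-(1 / 2) : ℝ) * δ) := by field_simp
      _ ≤ C / δ * (x ^ (-(1 / 2) : ℝ) * ((1 + x) / x) ^ (-ν - 1 / 2)) := by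
        gcongr
        refine min_one_two_rpow_le_rpow _ ?_ ?_
        · rw [le_div_iff₀ hx]; linarith
        · rw [div_le_iff₀ hx]; linarith
end

section
/- For every real ν and x > 0, the derivative of the Bessel function satisfies |J_ν'(x)| ≤ c_ν x^{ν-1} (1+x)^{-ν+1/2} for some constant c_ν depending only on ν, where J_ν'(x) = J_{ν-1}(x) − ν J_ν(x)/x. -/
/-!
For `x ≥ 1` we use Liouville's substitution: if `x f' = g` and `x g' = (μ² - x²) f` (Bessel's
equation of order `μ`), then `u = √x f` solves `u'' + (1 + (1/4 - μ²) / x²) u = 0`. The energy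
`E = u² + u'²` satisfies `|E'| ≤ |1/4 - μ²| E / x²`, so `E exp (|1/4 - μ²| / x)` is
nonincreasing, `u` stays bounded and `J_ν(x) = O(x^{-1/2})`. Bessel's equation is checked
termwise on the series `J_ν(x) = ∑ d_m (x/2)^{2m+ν}`, using `(m + 1)(m + 1 + ν) d_{m+1} = -d_m`.
For `x ≤ 1` the series gives `J_ν(x) = O(x^ν)`. Hence `|J_ν(x)| ≤ C x^ν max(1, x)^{-ν-1/2}`,
and since `(1 + x)^s` is comparable to `max(1, x)^s`, the recurrence
`J_ν' = J_{ν-1} - ν J_ν / x` gives the claim.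
-/

open Real

/-- The derivative of the Bessel function, given by the recurrence
`J_ν'(x) = J_{ν-1}(x) − ν J_ν(x)/x`. -/
noncomputable def besselJDeriv (ν : ℝ) (x : ℝ) : ℝ :=
  besselJ (ν - 1) x - ν * besselJ ν x / x

open Set Filter

noncomputable def besselSeries (d : ℕ → ℝ) (q x : ℝ) : ℝ :=
  ∑' m : ℕ, d m * (x / 2) ^ (2 * m) * (x / 2) ^ q

/-- The power series `∑ d m * z ^ m` has infinite radius of convergence. -/
def EntireCoeffs (d : ℕ → ℝ) : Prop :=
  ∀ r : ℝ, 0 ≤ r → Summable fun m => |d m| * r ^ m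

/-- The Euler operator `x d/dx` acts on `besselSeries d q` through its coefficients as
`eulerCoeffs q`. -/
def eulerCoeffs (q : ℝ) (d : ℕ → ℝ) (m : ℕ) : ℝ := (2 * m + q) * d m

theorem EntireCoeffs.linear_mul {d : ℕ → ℝ} (hd : EntireCoeffs d) (a b : ℝ) :
    EntireCoeffs fun m => (a * m + b) * d m := by
  intro r hr
  refine ((hd (2 * r) (by positivity)).mul_left (|a| + |b|)).of_nonneg_of_le
    (fun m => by positivity) fun m => ?_
  have hm : (m : ℝ) ≤ 2 ^ m := by exact_mod_cast (Nat.lt_two_pow_self (n := m)).le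
  have hlin : |a * m + b| ≤ (|a| + |b|) * 2 ^ m := by
    have h1 : (1 : ℝ) ≤ 2 ^ m := one_le_pow₀ (by norm_num)
    calc |a * m + b| ≤ |a| * m + |b| := by
          simpa [abs_mul] using abs_add_le (a * m) b
      _ ≤ (|a| + |b|) * 2 ^ m := by nlinarith [abs_nonneg a, abs_nonneg b]
  calc |(a * m + b) * d m| * r ^ m = |a * m + b| * (|d m| * r ^ m) := by rw [abs_mul]; ring
    _ ≤ (|a| + |b|) * 2 ^ m * (|d m| * r ^ m) := by gcongr
    _ = (|a| + |b|) * (|d m| * (2 * r) ^ m) := by rw [mul_pow]; ring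

theorem rpow_le_max_rpow {a b y : ℝ} (ha : 0 < a) (hay : a ≤ y) (hyb : y ≤ b) (q : ℝ) :
    y ^ q ≤ max (a ^ q) (b ^ q) := by
  rcases le_total 0 q with hq | hq
  · exact le_max_of_le_right (rpow_le_rpow (by linarith) hyb hq)
  · exact le_max_of_le_left (rpow_le_rpow_of_nonpos ha hay hq)

theorem hasDerivAt_half_pow_mul_half_rpow (c : ℝ) (n : ℕ) (q : ℝ) {x : ℝ} (hx : 0 < x) :
    HasDerivAt (fun y => c * (y / 2) ^ n * (y / 2) ^ q)
      ((n + q) * c * (x / 2) ^ n * (x / 2) ^ q / x) x := by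
  have hsplit {y : ℝ} (hy : 0 < y) :
      c * (y / 2) ^ n * (y / 2) ^ q = c * (y / 2) ^ ((n : ℝ) + q) := by
    rw [rpow_add (by positivity), rpow_natCast, mul_assoc]
  have hrpow := ((hasDerivAt_rpow_const (p := (n : ℝ) + q)
    (Or.inl (by positivity : x / 2 ≠ 0))).comp x ((hasDerivAt_id x).div_const 2)).const_mul c
  refine (hrpow.congr_of_eventuallyEq (eventually_of_mem (Ioi_mem_nhds hx)
    fun y hy => hsplit hy)).congr_deriv ?_
  rw [mul_assoc _ c, mul_assoc _ (c * _), hsplit hx, rpow_sub_one (by positivity)]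
  field_simp

section BesselSeries

variable {d : ℕ → ℝ}

theorem summable_besselSeries (hd : EntireCoeffs d) (q x : ℝ) :
    Summable fun m : ℕ => d m * (x / 2) ^ (2 * m) * (x / 2) ^ q := by
  refine Summable.mul_right _ (Summable.of_abs ?_)
  refine (hd ((x / 2) ^ 2) (sq_nonneg _)).congr fun m => ?_
  rw [pow_mul, abs_mul, abs_of_nonneg (pow_nonneg (sq_nonneg (x / 2)) m)]

theorem abs_besselSeries_le (hd : EntireCoeffs d) (q : ℝ) {x : ℝ} (hx₀ : 0 ≤ x)
    (hx₂ : x ≤ 2) : |besselSeries d q x| ≤ (∑' m, |d m|) * (x / 2) ^ q := by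
  have hsum : Summable fun m => |d m| :=
    (hd 1 zero_le_one).congr fun m => by rw [one_pow, mul_one]
  have hx : 0 ≤ x / 2 := by positivity
  have hterm (m : ℕ) : |d m * (x / 2) ^ (2 * m)| ≤ |d m| := by
    rw [abs_mul, abs_of_nonneg (pow_nonneg hx _)]
    exact mul_le_of_le_one_right (abs_nonneg _) (pow_le_one₀ hx (by linarith))
  have hsummable : Summable fun m => |d m * (x / 2) ^ (2 * m)| :=
    hsum.of_nonneg_of_le (fun _ => abs_nonneg _) hterm
  rw [besselSeries, tsum_mul_right, abs_mul, abs_of_nonneg (rpow_nonneg hx q)]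
  refine mul_le_mul_of_nonneg_right ?_ (rpow_nonneg hx q)
  calc |∑' m, d m * (x / 2) ^ (2 * m)| ≤ ∑' m, |d m * (x / 2) ^ (2 * m)| := by
        simpa only [Real.norm_eq_abs] using
          norm_tsum_le_tsum_norm (f := fun m => d m * (x / 2) ^ (2 * m)) hsummable
    _ ≤ ∑' m, |d m| := hsummable.tsum_le_tsum hterm hsum

theorem abs_besselSeries_term_div_le {a b y : ℝ} (ha : 0 < a) (hay : a ≤ y) (hyb : y ≤ b)
    (q : ℝ) (m : ℕ) :
    |d m * (y / 2) ^ (2 * m) * (y / 2) ^ q / y| ≤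
      |d m| * ((b / 2) ^ 2) ^ m * (max ((a / 2) ^ q) ((b / 2) ^ q) / a) := by
  have hy : 0 < y := ha.trans_le hay
  have hpow : (y / 2) ^ (2 * m) ≤ ((b / 2) ^ 2) ^ m := by
    rw [pow_mul]
    gcongr
  have hrpow : (y / 2) ^ q ≤ max ((a / 2) ^ q) ((b / 2) ^ q) :=
    rpow_le_max_rpow (by positivity) (by linarith) (by linarith) q
  have hy₂ : 0 ≤ y / 2 := by positivity
  rw [abs_div, abs_mul, abs_mul, abs_of_pos hy, abs_of_nonneg (pow_nonneg hy₂ _),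
    abs_of_nonneg (rpow_nonneg hy₂ _), mul_div_assoc]
  gcongr

theorem hasDerivAt_besselSeries (hd : EntireCoeffs d) (q : ℝ) {x : ℝ} (hx : 0 < x) :
    HasDerivAt (besselSeries d q) (besselSeries (eulerCoeffs q d) q x / x) x := by
  have he : EntireCoeffs (eulerCoeffs q d) := hd.linear_mul 2 q
  have hx' : x ∈ Ioo (x / 2) (2 * x) := ⟨by linarith, by linarith⟩
  have hterm (m : ℕ) (y : ℝ) (hy : y ∈ Ioo (x / 2) (2 * x)) :
      HasDerivAt (fun z => d m * (z / 2) ^ (2 * m) * (z / 2) ^ q)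
        (eulerCoeffs q d m * (y / 2) ^ (2 * m) * (y / 2) ^ q / y) y := by
    have hy₀ : 0 < y := by linarith [hy.1]
    convert hasDerivAt_half_pow_mul_half_rpow (d m) (2 * m) q hy₀ using 1
    push_cast [eulerCoeffs]
    ring
  have htsum := hasDerivAt_tsum_of_isPreconnected
    ((he ((2 * x / 2) ^ 2) (sq_nonneg _)).mul_right _) isOpen_Ioo isPreconnected_Ioo hterm
    (fun m y hy => abs_besselSeries_term_div_le (by positivity) hy.1.le hy.2.le q m) hx'
    (summable_besselSeries hd q x) hx'
  rwa [tsum_div_const] at htsum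

theorem besselSeries_eulerCoeffs_eulerCoeffs (hd : EntireCoeffs d) {q : ℝ}
    (hrec : ∀ m : ℕ, (m + 1) * (m + 1 + q) * d (m + 1) = -d m) (x : ℝ) :
    besselSeries (eulerCoeffs q (eulerCoeffs q d)) q x =
      (q ^ 2 - x ^ 2) * besselSeries d q x := by
  set w := x / 2
  set g : ℕ → ℝ := fun m => m * (m + q) * d m * w ^ (2 * m) * w ^ q
  have hg : Summable g := by
    refine (summable_besselSeries ((hd.linear_mul 1 q).linear_mul 1 0) q x).congr fun m => ?_
    simp only [g, w]
    ring
  have hshift : ∑' m, g m = -w ^ 2 * besselSeries d q x := by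
    rw [hg.tsum_eq_zero_add, besselSeries, ← tsum_mul_left]
    simp only [g, CharP.cast_eq_zero, zero_mul, zero_add]
    refine tsum_congr fun m => ?_
    push_cast
    linear_combination (w ^ (2 * m) * w ^ 2 * w ^ q) * hrec m
  calc besselSeries (eulerCoeffs q (eulerCoeffs q d)) q x
      = ∑' m, (q ^ 2 * (d m * w ^ (2 * m) * w ^ q) + 4 * g m) := by
        refine tsum_congr fun m => ?_
        simp only [g, eulerCoeffs]
        ring
    _ = q ^ 2 * besselSeries d q x + 4 * ∑' m, g m := by
        rw [((summable_besselSeries hd q x).mul_left _).tsum_add (hg.mul_left 4),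
          tsum_mul_left, tsum_mul_left, besselSeries]
    _ = (q ^ 2 - x ^ 2) * besselSeries d q x := by
        rw [hshift]
        ring

end BesselSeries

theorem sq_add_sq_le_of_hasDerivAt {u v : ℝ → ℝ} {a b : ℝ} (ha : 0 < a)
    (hu : ∀ x, a ≤ x → HasDerivAt u (v x) x)
    (hv : ∀ x, a ≤ x → HasDerivAt v (-(1 + b / x ^ 2) * u x) x) {x : ℝ} (hx : a ≤ x) :
    u x ^ 2 + v x ^ 2 ≤ (u a ^ 2 + v a ^ 2) * exp (|b| / a) := by
  set F : ℝ → ℝ := fun y => (u y ^ 2 + v y ^ 2) * exp (|b| / y)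
  have hF (y : ℝ) (hy : a ≤ y) : HasDerivAt F
      (-(exp (|b| / y) / y ^ 2) * (|b| * (u y ^ 2 + v y ^ 2) + 2 * b * (u y * v y))) y := by
    have hy₀ : y ≠ 0 := (ha.trans_le hy).ne'
    have hexp := ((hasDerivAt_const y |b|).fun_div (hasDerivAt_id y) hy₀).exp
    refine ((((hu y hy).fun_pow 2).fun_add ((hv y hy).fun_pow 2)).fun_mul hexp).congr_deriv ?_
    simp only [id]
    field_simp
    ring
  have hanti : AntitoneOn F (Ici a) := by
    refine antitoneOn_of_hasDerivWithinAt_nonpos (convex_Ici a)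
      (fun y hy => (hF y hy).continuousAt.continuousWithinAt)
      (fun y hy => (hF y (interior_subset hy)).hasDerivWithinAt) fun y hy => ?_
    have hquad : 0 ≤ |b| * (u y ^ 2 + v y ^ 2) + 2 * b * (u y * v y) := by
      nlinarith [abs_mul_abs_self b, abs_nonneg b, sq_nonneg (u y + v y), sq_nonneg (u y - v y),
        neg_abs_le b, le_abs_self b]
    exact mul_nonpos_of_nonpos_of_nonneg (neg_nonpos.2 (by positivity)) hquad
  have hexp : 1 ≤ exp (|b| / x) := one_le_exp (div_nonneg (abs_nonneg b) (by linarith))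
  calc u x ^ 2 + v x ^ 2 ≤ F x := le_mul_of_one_le_right (by positivity) hexp
    _ ≤ F a := hanti self_mem_Ici hx hx

theorem exists_abs_le_div_sqrt_of_hasDerivAt {f g : ℝ → ℝ} {μ : ℝ}
    (hf : ∀ x, 0 < x → HasDerivAt f (g x / x) x)
    (hg : ∀ x, 0 < x → HasDerivAt g ((μ ^ 2 - x ^ 2) * f x / x) x) :
    ∃ B, ∀ x, 1 ≤ x → |f x| ≤ B / √x := by
  set u : ℝ → ℝ := fun x => √x * f x
  set v : ℝ → ℝ := fun x => (f x / 2 + g x) / √x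
  have hu (x : ℝ) (hx : 1 ≤ x) : HasDerivAt u (v x) x := by
    have hx₀ : 0 < x := by linarith
    refine ((hasDerivAt_sqrt hx₀.ne').fun_mul (hf x hx₀)).congr_deriv ?_
    have hs : √x ^ 2 = x := sq_sqrt hx₀.le
    simp only [v]
    field_simp
    rw [hs]
    ring
  have hv (x : ℝ) (hx : 1 ≤ x) : HasDerivAt v (-(1 + (1 / 4 - μ ^ 2) / x ^ 2) * u x) x := by
    have hx₀ : 0 < x := by linarith
    refine ((((hf x hx₀).div_const 2).fun_add (hg x hx₀)).fun_div (hasDerivAt_sqrt hx₀.ne')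
      (sqrt_pos.2 hx₀).ne').congr_deriv ?_
    have hs : √x ^ 2 = x := sq_sqrt hx₀.le
    simp only [u]
    field_simp
    rw [show √x ^ 4 = (√x ^ 2) ^ 2 by ring, hs]
    ring
  refine ⟨√((u 1 ^ 2 + v 1 ^ 2) * exp |1 / 4 - μ ^ 2|), fun x hx => ?_⟩
  have henergy := sq_add_sq_le_of_hasDerivAt one_pos hu hv hx
  rw [div_one] at henergy
  have hx₀ : 0 < √x := sqrt_pos.2 (by linarith)
  rw [le_div_iff₀ hx₀, ← abs_of_pos hx₀, ← abs_mul, mul_comm]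
  exact abs_le_sqrt (by nlinarith [sq_nonneg (v x)])

theorem besselJ_eq_besselSeries (ν : ℝ) : besselJ ν = besselSeries (besselCoeff ν) ν := rfl

theorem besselCoeff_succ (ν : ℝ) (m : ℕ) :
    (m + 1) * (m + 1 + ν) * besselCoeff ν (m + 1) = -besselCoeff ν m := by
  simp only [besselCoeff, Nat.factorial_succ]
  push_cast
  rcases eq_or_ne ((m : ℝ) + 1 + ν) 0 with hs | hs
  · have hΓ : Gamma (m + ν + 1) = 0 := by
      rw [show (m : ℝ) + ν + 1 = 0 by linarith, Gamma_zero]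
    simp [hs, hΓ]
  have hs' : (m : ℝ) + ν + 1 ≠ 0 := by rwa [add_right_comm]
  rw [show (m : ℝ) + 1 + ν + 1 = (m + 1 + ν) + 1 by ring, Gamma_add_one hs,
    show (m : ℝ) + 1 + ν = m + ν + 1 by ring]
  rcases eq_or_ne (Gamma (m + ν + 1)) 0 with hΓ | hΓ
  · simp [hΓ]
  field_simp
  ring

theorem exists_abs_inv_Gamma_le (ν : ℝ) : ∃ C, ∀ m : ℕ, |Gamma (m + ν + 1)|⁻¹ ≤ C := by
  obtain ⟨N, hN⟩ := exists_nat_ge (1 - ν)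
  have hbound : ∀ᶠ m : ℕ in atTop, |Gamma (m + ν + 1)|⁻¹ ≤ 1 := by
    filter_upwards [eventually_ge_atTop N] with m hm
    have h2 : (2 : ℝ) ≤ m + ν + 1 := by
      have : (N : ℝ) ≤ m := by exact_mod_cast hm
      linarith
    have hΓ : 1 ≤ Gamma (m + ν + 1) :=
      Gamma_two.symm.trans_le (Gamma_strictMonoOn_Ici.monotoneOn self_mem_Ici h2 h2)
    rw [abs_of_pos (by linarith)]
    exact inv_le_one_of_one_le₀ hΓ
  obtain ⟨C, hC⟩ := (isBoundedUnder_of_eventually_le hbound).bddAbove_range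
  exact ⟨C, fun m => hC (mem_range_self m)⟩

theorem entireCoeffs_besselCoeff (ν : ℝ) : EntireCoeffs (besselCoeff ν) := by
  obtain ⟨C, hC⟩ := exists_abs_inv_Gamma_le ν
  intro r hr
  refine ((summable_pow_div_factorial r).mul_left C).of_nonneg_of_le
    (fun m => by positivity) fun m => ?_
  rw [besselCoeff, abs_div, abs_pow, abs_neg, abs_one, one_pow, abs_mul, Nat.abs_cast,
    one_div_mul_eq_div, ← div_div, div_eq_mul_inv, mul_comm]
  exact mul_le_mul_of_nonneg_right (hC m) (by positivity)

theorem exists_abs_besselJ_le_div_sqrt (ν : ℝ) : ∃ B, ∀ x, 1 ≤ x → |besselJ ν x| ≤ B / √x := by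
  have hd := entireCoeffs_besselCoeff ν
  rw [besselJ_eq_besselSeries]
  refine exists_abs_le_div_sqrt_of_hasDerivAt (μ := ν)
    (fun x hx => hasDerivAt_besselSeries hd ν hx) fun x hx => ?_
  rw [← besselSeries_eulerCoeffs_eulerCoeffs hd (besselCoeff_succ ν) x]
  exact hasDerivAt_besselSeries (hd.linear_mul 2 ν) ν hx

theorem abs_besselJ_le (ν : ℝ) :
    ∃ C, 0 < C ∧ ∀ x, 0 < x → |besselJ ν x| ≤ C * x ^ ν * max 1 x ^ (-ν - 1 / 2) := by
  obtain ⟨B, hB⟩ := exists_abs_besselJ_le_div_sqrt ν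
  set A := ∑' m, |besselCoeff ν m|
  have hA : 0 ≤ A / 2 ^ ν := div_nonneg (tsum_nonneg fun m => abs_nonneg _) (by positivity)
  refine ⟨A / 2 ^ ν + |B| + 1, by positivity, fun x hx => ?_⟩
  rcases le_total x 1 with hx₁ | hx₁
  · rw [max_eq_left hx₁, one_rpow, mul_one]
    calc |besselJ ν x| ≤ A * (x / 2) ^ ν :=
          abs_besselSeries_le (entireCoeffs_besselCoeff ν) ν hx.le (by linarith)
      _ = A / 2 ^ ν * x ^ ν := by rw [div_rpow hx.le zero_le_two]; ring
      _ ≤ (A / 2 ^ ν + |B| + 1) * x ^ ν := by gcongr; linarith [abs_nonneg B]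
  · rw [max_eq_right hx₁, mul_assoc, ← rpow_add hx, show ν + (-ν - 1 / 2) = -(1 / 2) by ring,
      rpow_neg hx.le, ← sqrt_eq_rpow, ← div_eq_mul_inv]
    calc |besselJ ν x| ≤ B / √x := hB x hx₁
      _ ≤ (A / 2 ^ ν + |B| + 1) / √x := by gcongr; linarith [le_abs_self B]

theorem min_one_two_rpow_mul_max_one_rpow_le (s : ℝ) {x : ℝ} (hx : 0 ≤ x) :
    min 1 (2 ^ s) * max 1 x ^ s ≤ (1 + x) ^ s := by
  have hmax : 0 < max 1 x := lt_max_of_lt_left one_pos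
  rcases le_total 0 s with hs | hs
  · calc min 1 (2 ^ s) * max 1 x ^ s ≤ 1 * max 1 x ^ s := by gcongr; exact min_le_left _ _
      _ ≤ (1 + x) ^ s := by
        rw [one_mul]
        exact rpow_le_rpow hmax.le (max_le (by linarith) (by linarith)) hs
  · calc min 1 (2 ^ s) * max 1 x ^ s ≤ 2 ^ s * max 1 x ^ s := by gcongr; exact min_le_right _ _
      _ = (2 * max 1 x) ^ s := (mul_rpow zero_le_two hmax.le).symm
      _ ≤ (1 + x) ^ s := by
        refine rpow_le_rpow_of_nonpos (by positivity) ?_ hs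
        linarith [le_max_left 1 x, le_max_right 1 x]

theorem abs_besselJDeriv_le (ν : ℝ) :
    ∃ C, 0 < C ∧ ∀ x, 0 < x → |besselJDeriv ν x| ≤ C * x ^ (ν - 1) * max 1 x ^ (-ν + 1 / 2) := by
  obtain ⟨C₁, hC₁, h₁⟩ := abs_besselJ_le (ν - 1)
  obtain ⟨C₂, hC₂, h₂⟩ := abs_besselJ_le ν
  refine ⟨C₁ + |ν| * C₂, by positivity, fun x hx => ?_⟩
  have hJ₁ := h₁ x hx
  have hJ₂ := h₂ x hx
  rw [show -(ν - 1) - 1 / 2 = -ν + 1 / 2 by ring] at hJ₁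
  set M := max 1 x
  have hM : M ^ (-ν - 1 / 2) ≤ M ^ (-ν + 1 / 2) :=
    rpow_le_rpow_of_exponent_le (le_max_left 1 x) (by linarith)
  have hpow : x ^ ν / x = x ^ (ν - 1) := (rpow_sub_one hx.ne' ν).symm
  calc |besselJDeriv ν x| ≤ |besselJ (ν - 1) x| + |ν| * |besselJ ν x| / x := by
        refine (abs_sub _ _).trans_eq ?_
        rw [abs_div, abs_mul, abs_of_pos hx]
    _ ≤ C₁ * x ^ (ν - 1) * M ^ (-ν + 1 / 2) + |ν| * (C₂ * x ^ ν * M ^ (-ν - 1 / 2)) / x := by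
        gcongr
    _ = C₁ * x ^ (ν - 1) * M ^ (-ν + 1 / 2) + |ν| * C₂ * x ^ (ν - 1) * M ^ (-ν - 1 / 2) := by
        rw [← hpow]
        ring
    _ ≤ (C₁ + |ν| * C₂) * x ^ (ν - 1) * M ^ (-ν + 1 / 2) := by
        linarith [mul_le_mul_of_nonneg_left hM (by positivity : 0 ≤ |ν| * C₂ * x ^ (ν - 1))]

/-- For every real `ν` and `x > 0`,
`|J_ν'(x)| ≤ c_ν x^{ν-1} (1+x)^{-ν+1/2}` for some constant `c_ν` depending only on `ν`,
where `J_ν'(x) = J_{ν-1}(x) − ν J_ν(x)/x`. -/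
theorem besselJ_deriv_bound (ν : ℝ) :
    ∃ c : ℝ, 0 < c ∧ ∀ x : ℝ, 0 < x →
      |besselJDeriv ν x| ≤ c * x ^ (ν - 1) * (1 + x) ^ (-ν + 1/2) := by
  obtain ⟨C, hC, hJ'⟩ := abs_besselJDeriv_le ν
  set κ : ℝ := min 1 (2 ^ (-ν + 1 / 2))
  have hκ : 0 < κ := lt_min one_pos (by positivity)
  refine ⟨C / κ, by positivity, fun x hx => ?_⟩
  have hκM := min_one_two_rpow_mul_max_one_rpow_le (-ν + 1 / 2) hx.le
  calc |besselJDeriv ν x| ≤ C * x ^ (ν - 1) * max 1 x ^ (-ν + 1 / 2) := hJ' x hx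
    _ = C / κ * x ^ (ν - 1) * (κ * max 1 x ^ (-ν + 1 / 2)) := by field_simp
    _ ≤ C / κ * x ^ (ν - 1) * (1 + x) ^ (-ν + 1 / 2) := by gcongr
end

section
/- For α ∈ (0,1) the following three integrals are bounded uniformly in θ ∈ ℝ: ∫_0^∞ e^{−αs} ds ≤ C, ∫_0^∞ |(e^{−s} − cos θ) sinh(αs)| / (cosh s − cos θ) ds ≤ C, and ∫_0^∞ |sin θ| cosh(αs) / (cosh s − cos θ) ds ≤ C, with C depending only on α. -/
open Real MeasureTheory

open Set in
lemma aux_int_exp {c : ℝ} (hc : 0 < c) : (∫ s in Ioi (0:ℝ), Real.exp (-(c * s))) = 1/c := by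
  have h := integral_comp_mul_left_Ioi (fun x => Real.exp (-x)) 0 hc
  simp only [mul_zero, integral_exp_neg_Ioi_zero, smul_eq_mul, mul_one] at h
  rw [h, one_div]

lemma aux_cosh_lb (s : ℝ) (hs : 0 ≤ s) : 1 + s^2/2 ≤ Real.cosh s := by
  have h1 : Real.cosh s = 1 + 2 * Real.sinh (s/2)^2 := by
    have h := Real.cosh_two_mul (s/2)
    rw [show 2*(s/2) = s by ring, Real.cosh_sq] at h
    rw [h]; ring
  have h2 : s/2 ≤ Real.sinh (s/2) := Real.self_le_sinh_iff.2 (by linarith)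
  nlinarith [Real.sinh_nonneg_iff.2 (show (0:ℝ) ≤ s/2 by linarith)]

lemma aux_cosh_one_le : Real.cosh 1 ≤ 2 := by
  rw [Real.cosh_eq]
  have h1 := Real.exp_one_lt_d9
  have h2 : Real.exp (-1) ≤ 1 := by
    rw [show (1:ℝ) = Real.exp 0 by simp]; exact Real.exp_le_exp.2 (by norm_num)
  linarith

lemma aux_sinh_le_half_exp (x : ℝ) : Real.sinh x ≤ Real.exp x / 2 := by
  rw [Real.sinh_eq]
  have := Real.exp_pos (-x)
  linarith

lemma aux_cosh_le_exp (x : ℝ) (hx : 0 ≤ x) : Real.cosh x ≤ Real.exp x := by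
  rw [Real.cosh_eq]
  have : Real.exp (-x) ≤ Real.exp x := Real.exp_le_exp.2 (by linarith)
  linarith [Real.exp_pos x]

lemma aux_exp_lb (s : ℝ) (hs : 1 ≤ s) : Real.exp s / 8 ≤ Real.cosh s - 1 := by
  rw [Real.cosh_eq]
  have h1 : Real.exp 1 ≤ Real.exp s := Real.exp_le_exp.2 hs
  have h2 := Real.exp_one_gt_d9
  linarith [Real.exp_pos (-s)]

open Set in
lemma aux_cauchy {b : ℝ} (hb : 0 ≤ b) :
    Integrable (fun s : ℝ => b / (s^2 + 2*b^2)) ∧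
    (∫ s : ℝ, b / (s^2 + 2*b^2)) ≤ π := by
  rcases eq_or_lt_of_le hb with rfl | hb
  · simp [Real.pi_pos.le]
  · set a : ℝ := (Real.sqrt 2 * b)⁻¹ with ha
    have h2 : Real.sqrt 2 ^ 2 = 2 := Real.sq_sqrt (by norm_num)
    have hs2 : 0 < Real.sqrt 2 := Real.sqrt_pos.2 (by norm_num)
    have ha0 : a ≠ 0 := by positivity
    have key : ∀ s : ℝ, b / (s^2 + 2*b^2) = (2*b)⁻¹ * (1 + (a*s)^2)⁻¹ := by
      intro s
      have hd : s^2 + 2*b^2 > 0 := by positivity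
      rw [ha]
      field_simp
      nlinarith [show (Real.sqrt 2 * b)^2 = 2*b^2 by rw [mul_pow, h2], sq_nonneg s]
    have hint : Integrable (fun s : ℝ => (2*b)⁻¹ * (1 + (a*s)^2)⁻¹) :=
      (integrable_inv_one_add_sq.comp_mul_left' ha0).const_mul _
    have hval : (∫ s : ℝ, (2*b)⁻¹ * (1 + (a*s)^2)⁻¹) = (2*b)⁻¹ * (Real.sqrt 2 * b * π) := by
      rw [integral_const_mul]
      have := Measure.integral_comp_mul_left (fun x : ℝ => (1 + x^2)⁻¹) a
      simp only [integral_univ_inv_one_add_sq, smul_eq_mul] at this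
      rw [this, ha, inv_inv, abs_of_pos (by positivity)]
    constructor
    · exact hint.congr (ae_of_all _ fun s => (key s).symm)
    · rw [integral_congr_ae (ae_of_all _ key), hval]
      have : (2*b)⁻¹ * (Real.sqrt 2 * b * π) = (Real.sqrt 2 / 2) * π := by
        field_simp
      rw [this]
      have hle : Real.sqrt 2 / 2 ≤ 1 := by
        rw [div_le_one (by norm_num)]
        nlinarith [Real.sq_sqrt (show (0:ℝ) ≤ 2 by norm_num), Real.sqrt_nonneg 2]
      nlinarith [Real.pi_pos]

open Set in
lemma aux_pw2 {α : ℝ} (hα0 : 0 < α) (hα1 : α < 1) (θ : ℝ) {s : ℝ} (hs : 0 < s) :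
    |(Real.exp (-s) - Real.cos θ) * Real.sinh (α * s)| / (Real.cosh s - Real.cos θ)
      ≤ 20 * Real.exp ((α - 1) * s) := by
  have hc1 : Real.cos θ ≤ 1 := Real.cos_le_one θ
  have hch : 1 < Real.cosh s := Real.one_lt_cosh.2 hs.ne'
  have hd : 0 < Real.cosh s - Real.cos θ := by linarith
  have hshn : 0 ≤ Real.sinh (α * s) := Real.sinh_nonneg_iff.2 (by positivity)
  rw [div_le_iff₀ hd, abs_mul, abs_of_nonneg hshn]
  rcases le_or_gt s 1 with h1 | h1
  · -- small s
    have he : |Real.exp (-s) - Real.cos θ| ≤ s + (1 - Real.cos θ) := by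
      have h3 : 1 - Real.exp (-s) ≤ s := by
        have := Real.add_one_le_exp (-s); linarith
      have h4 : Real.exp (-s) ≤ 1 := by
        rw [show (1:ℝ) = Real.exp 0 by simp]; exact Real.exp_le_exp.2 (by linarith)
      rw [abs_le]
      constructor
      · have := Real.exp_pos (-s); nlinarith
      · nlinarith
    have hS2 : Real.sinh (α * s) ≤ 2 := by
      calc Real.sinh (α * s) ≤ Real.sinh 1 := Real.sinh_le_sinh.2 (by nlinarith)
        _ ≤ Real.cosh 1 := by
            rw [Real.sinh_eq, Real.cosh_eq]; linarith [Real.exp_pos (-1)]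
        _ ≤ 2 := by
            rw [Real.cosh_eq]
            have := Real.exp_one_lt_d9
            have h4 : Real.exp (-1) ≤ 1 := by
              rw [show (1:ℝ) = Real.exp 0 by simp]; exact Real.exp_le_exp.2 (by norm_num)
            linarith
    have hSs : Real.sinh (α * s) ≤ Real.sinh s := Real.sinh_le_sinh.2 (by nlinarith)
    have hss : s * Real.sinh s ≤ 4 * (Real.cosh s - 1) := by
      have hden : Real.cosh s - 1 = 2 * Real.sinh (s/2)^2 := by
        have h := Real.cosh_two_mul (s/2)
        rw [show 2*(s/2) = s by ring, Real.cosh_sq] at h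
        rw [h]; ring
      have hsinh : Real.sinh s = 2 * Real.sinh (s/2) * Real.cosh (s/2) := by
        have h := Real.sinh_two_mul (s/2)
        rwa [show 2*(s/2) = s by ring] at h
      have hch2 : Real.cosh (s/2) ≤ 2 := by
        calc Real.cosh (s/2) ≤ Real.cosh 1 := by
              rw [Real.cosh_le_cosh]; rw [abs_of_nonneg (by linarith), abs_one]; linarith
          _ ≤ 2 := by
              rw [Real.cosh_eq]
              have := Real.exp_one_lt_d9
              have h4 : Real.exp (-1) ≤ 1 := by
                rw [show (1:ℝ) = Real.exp 0 by simp]; exact Real.exp_le_exp.2 (by norm_num)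
              linarith
      have hs2 : s/2 ≤ Real.sinh (s/2) := Real.self_le_sinh_iff.2 (by linarith)
      have hsh2n : 0 ≤ Real.sinh (s/2) := by linarith
      rw [hden, hsinh]
      nlinarith
    have hexp : 6 ≤ 20 * Real.exp ((α - 1) * s) := by
      have : Real.exp (-1) ≤ Real.exp ((α - 1) * s) := Real.exp_le_exp.2 (by nlinarith)
      have h9 : (1:ℝ)/3 ≤ Real.exp (-1) := by
        rw [Real.exp_neg, le_inv_comm₀ (by norm_num) (Real.exp_pos 1)]
        have := Real.exp_one_lt_d9; linarith
      linarith
    calc |Real.exp (-s) - Real.cos θ| * Real.sinh (α * s)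
        ≤ (s + (1 - Real.cos θ)) * Real.sinh (α * s) :=
          mul_le_mul_of_nonneg_right he hshn
      _ = s * Real.sinh (α * s) + (1 - Real.cos θ) * Real.sinh (α * s) := by ring
      _ ≤ s * Real.sinh s + (1 - Real.cos θ) * 2 := by
          gcongr <;> linarith
      _ ≤ 4 * (Real.cosh s - 1) + 2 * (1 - Real.cos θ) := by linarith
      _ ≤ 6 * (Real.cosh s - Real.cos θ) := by nlinarith
      _ ≤ 20 * Real.exp ((α - 1) * s) * (Real.cosh s - Real.cos θ) := by
          nlinarith
  · -- large s
    have he : |Real.exp (-s) - Real.cos θ| ≤ 2 := by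
      have h4 : Real.exp (-s) ≤ 1 := by
        rw [show (1:ℝ) = Real.exp 0 by simp]; exact Real.exp_le_exp.2 (by linarith)
      have h5 : -1 ≤ Real.cos θ := Real.neg_one_le_cos θ
      rw [abs_le]; constructor <;> [nlinarith [Real.exp_pos (-s)]; nlinarith]
    have hS : Real.sinh (α * s) ≤ Real.exp (α * s) / 2 := by
      rw [Real.sinh_eq]; linarith [Real.exp_pos (-(α*s))]
    have hlb : Real.exp s / 8 ≤ Real.cosh s - 1 := by
      rw [Real.cosh_eq]
      have h6 : Real.exp 1 ≤ Real.exp s := Real.exp_le_exp.2 h1.le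
      have := Real.exp_one_gt_d9
      linarith [Real.exp_pos (-s)]
    have hkey : Real.exp ((α - 1) * s) * Real.exp s = Real.exp (α * s) := by
      rw [← Real.exp_add]; ring_nf
    calc |Real.exp (-s) - Real.cos θ| * Real.sinh (α * s)
        ≤ 2 * (Real.exp (α * s) / 2) := by
          apply mul_le_mul he hS hshn (by norm_num)
      _ = Real.exp (α * s) := by ring
      _ ≤ 20 * Real.exp ((α - 1) * s) * (Real.exp s / 8) := by
          rw [show 20 * Real.exp ((α - 1) * s) * (Real.exp s / 8)
              = (20/8) * (Real.exp ((α - 1) * s) * Real.exp s) by ring, hkey]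
          nlinarith [Real.exp_pos (α * s)]
      _ ≤ 20 * Real.exp ((α - 1) * s) * (Real.cosh s - Real.cos θ) := by
          have h8 : Real.exp s / 8 ≤ Real.cosh s - Real.cos θ := by linarith
          have h9 : (0:ℝ) < 20 * Real.exp ((α - 1) * s) := by positivity
          exact mul_le_mul_of_nonneg_left h8 h9.le

open Set in
lemma aux_pw3 {α : ℝ} (hα0 : 0 < α) (hα1 : α < 1) (θ : ℝ) {s : ℝ} (hs : 0 < s) :
    |Real.sin θ| * Real.cosh (α * s) / (Real.cosh s - Real.cos θ)
      ≤ 6 * (Real.sqrt (1 - Real.cos θ) / (s^2 + 2 * Real.sqrt (1 - Real.cos θ)^2))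
        + 8 * Real.exp ((α - 1) * s) := by
  set b : ℝ := Real.sqrt (1 - Real.cos θ) with hbdef
  have hc1 : Real.cos θ ≤ 1 := Real.cos_le_one θ
  have hb0 : 0 ≤ b := Real.sqrt_nonneg _
  have hbsq : b^2 = 1 - Real.cos θ := Real.sq_sqrt (by linarith)
  have hch : 1 < Real.cosh s := Real.one_lt_cosh.2 hs.ne'
  have hd : 0 < Real.cosh s - Real.cos θ := by linarith
  have hchq : 1 + s^2/2 ≤ Real.cosh s := by
    have h1 : Real.cosh s = 1 + 2 * Real.sinh (s/2)^2 := by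
      have h := Real.cosh_two_mul (s/2)
      rw [show 2*(s/2) = s by ring, Real.cosh_sq] at h
      rw [h]; ring
    have h2 : s/2 ≤ Real.sinh (s/2) := Real.self_le_sinh_iff.2 (by linarith)
    nlinarith
  rcases le_or_gt s 1 with h1 | h1
  · -- small s : bound by the Cauchy term
    have hmain : |Real.sin θ| * Real.cosh (α * s) / (Real.cosh s - Real.cos θ)
        ≤ 6 * (b / (s^2 + 2*b^2)) := by
      have hsin : |Real.sin θ| ≤ Real.sqrt 2 * b := by
        have h2 : Real.sin θ^2 ≤ 2 * (1 - Real.cos θ) := by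
          nlinarith [Real.sin_sq_add_cos_sq θ]
        calc |Real.sin θ| = Real.sqrt (Real.sin θ^2) := (Real.sqrt_sq_eq_abs _).symm
          _ ≤ Real.sqrt (2 * (1 - Real.cos θ)) := Real.sqrt_le_sqrt h2
          _ = Real.sqrt 2 * b := by rw [Real.sqrt_mul (by norm_num)]
      have hcosh2 : Real.cosh (α * s) ≤ 2 := by
        calc Real.cosh (α * s) ≤ Real.cosh 1 := by
              rw [Real.cosh_le_cosh, abs_of_nonneg (by positivity), abs_one]; nlinarith
          _ ≤ 2 := by
              rw [Real.cosh_eq]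
              have := Real.exp_one_lt_d9
              have h4 : Real.exp (-1) ≤ 1 := by
                rw [show (1:ℝ) = Real.exp 0 by simp]; exact Real.exp_le_exp.2 (by norm_num)
              linarith
      have hden : (s^2 + 2*b^2)/2 ≤ Real.cosh s - Real.cos θ := by nlinarith
      have hden0 : 0 < (s^2 + 2*b^2)/2 := by positivity
      calc |Real.sin θ| * Real.cosh (α * s) / (Real.cosh s - Real.cos θ)
          ≤ (Real.sqrt 2 * b * 2) / ((s^2 + 2*b^2)/2) := by
            apply div_le_div₀ (by positivity) _ hden0 hden
            have := Real.cosh_pos (x := α * s)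
            calc |Real.sin θ| * Real.cosh (α * s) ≤ (Real.sqrt 2 * b) * Real.cosh (α * s) :=
                  mul_le_mul_of_nonneg_right hsin this.le
              _ ≤ (Real.sqrt 2 * b) * 2 := by
                  apply mul_le_mul_of_nonneg_left hcosh2 (by positivity)
              _ = Real.sqrt 2 * b * 2 := by ring
        _ = (4 * Real.sqrt 2) * (b / (s^2 + 2*b^2)) := by
            field_simp; ring
        _ ≤ 6 * (b / (s^2 + 2*b^2)) := by
            have hsqrt : Real.sqrt 2 ≤ 3/2 := by
              rw [show (3/2 : ℝ) = Real.sqrt ((3/2)^2) by rw [Real.sqrt_sq]; norm_num]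
              exact Real.sqrt_le_sqrt (by norm_num)
            have hfrac : 0 ≤ b / (s^2 + 2*b^2) := by positivity
            nlinarith
    linarith [hmain, mul_pos (by norm_num : (0:ℝ) < 8) (Real.exp_pos ((α-1)*s))]
  · -- large s : bound by the exponential term
    have hmain : |Real.sin θ| * Real.cosh (α * s) / (Real.cosh s - Real.cos θ)
        ≤ 8 * Real.exp ((α - 1) * s) := by
      rw [div_le_iff₀ hd]
      have hsin : |Real.sin θ| ≤ 1 := Real.abs_sin_le_one θ
      have hcosh : Real.cosh (α * s) ≤ Real.exp (α * s) := by
        rw [Real.cosh_eq]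
        have : Real.exp (-(α*s)) ≤ Real.exp (α*s) := Real.exp_le_exp.2 (by nlinarith)
        linarith [Real.exp_pos (α*s)]
      have hlb : Real.exp s / 8 ≤ Real.cosh s - 1 := by
        rw [Real.cosh_eq]
        have h6 : Real.exp 1 ≤ Real.exp s := Real.exp_le_exp.2 h1.le
        have := Real.exp_one_gt_d9
        linarith [Real.exp_pos (-s)]
      have hkey : Real.exp ((α - 1) * s) * Real.exp s = Real.exp (α * s) := by
        rw [← Real.exp_add]; ring_nf
      calc |Real.sin θ| * Real.cosh (α * s) ≤ 1 * Real.exp (α * s) :=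
            mul_le_mul hsin hcosh (Real.cosh_pos (α * s)).le (by norm_num)
        _ = Real.exp (α * s) := by ring
        _ ≤ 8 * Real.exp ((α - 1) * s) * (Real.exp s / 8) := by
            rw [show 8 * Real.exp ((α - 1) * s) * (Real.exp s / 8)
                = Real.exp ((α - 1) * s) * Real.exp s by ring, hkey]
        _ ≤ 8 * Real.exp ((α - 1) * s) * (Real.cosh s - Real.cos θ) := by
            have h8 : Real.exp s / 8 ≤ Real.cosh s - Real.cos θ := by linarith
            exact mul_le_mul_of_nonneg_left h8 (by positivity)
    have hpos : 0 ≤ 6 * (b / (s^2 + 2*b^2)) := by positivity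
    linarith

set_option maxHeartbeats 1000000 in
open Set in
/-- For `α ∈ (0,1)` the three integrals arising in the bound of the diffractive part of the
Aharonov–Bohm kernel are bounded uniformly in `θ ∈ ℝ`:
`∫_0^∞ e^{−αs} ds ≤ C`,
`∫_0^∞ |(e^{−s} − cos θ) sinh(αs)| / (cosh s − cos θ) ds ≤ C`, and
`∫_0^∞ |sin θ| cosh(αs) / (cosh s − cos θ) ds ≤ C`, with `C` depending only on `α`. -/
theorem diffractive_integrals_uniformly_bounded (α : ℝ) (hα : α ∈ Set.Ioo (0 : ℝ) 1) :
    ∃ C : ℝ, 0 < C ∧ ∀ θ : ℝ,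
      (∫ s in Set.Ioi (0 : ℝ), Real.exp (-α * s)) ≤ C ∧
      (∫ s in Set.Ioi (0 : ℝ),
        |(Real.exp (-s) - Real.cos θ) * Real.sinh (α * s)| /
          (Real.cosh s - Real.cos θ)) ≤ C ∧
      (∫ s in Set.Ioi (0 : ℝ),
        |Real.sin θ| * Real.cosh (α * s) / (Real.cosh s - Real.cos θ)) ≤ C := by
  obtain ⟨hα0, hα1⟩ := hα
  have h1α : 0 < 1 - α := by linarith
  have hinvα : 0 < 1/α := by positivity
  have hinv1α : 0 < 1/(1-α) := by positivity
  have hπ := Real.pi_pos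
  have hIe : IntegrableOn (fun s : ℝ => Real.exp ((α-1)*s)) (Ioi 0) := by
    have h := exp_neg_integrableOn_Ioi 0 h1α
    have heq : (fun s : ℝ => Real.exp ((α-1)*s)) = fun s : ℝ => Real.exp (-(1-α)*s) := by
      funext s; ring_nf
    rwa [heq]
  have hIeval : (∫ s in Ioi (0:ℝ), Real.exp ((α-1)*s)) = 1/(1-α) := by
    have heq : (fun s : ℝ => Real.exp ((α-1)*s)) = fun s : ℝ => Real.exp (-((1-α)*s)) := by
      funext s; ring_nf
    rw [heq]; exact aux_int_exp h1α
  refine ⟨1/α + 28/(1-α) + 6*π, by positivity, fun θ => ?_⟩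
  have h28 : 28/(1-α) = 28 * (1/(1-α)) := by ring
  refine ⟨?_, ?_, ?_⟩
  · -- first integral
    have hval : (∫ s in Ioi (0:ℝ), Real.exp (-α * s)) = 1/α := by
      simp only [neg_mul]
      exact aux_int_exp hα0
    rw [hval]
    nlinarith
  · -- second integral
    have hmono := integral_mono_of_nonneg (μ := volume.restrict (Ioi 0))
      (f := fun s => |(Real.exp (-s) - Real.cos θ) * Real.sinh (α * s)| /
          (Real.cosh s - Real.cos θ))
      (g := fun s => 20 * Real.exp ((α-1)*s))
      (ae_of_all _ fun s => div_nonneg (abs_nonneg _)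
        (by linarith [Real.one_le_cosh s, Real.cos_le_one θ]))
      (hIe.const_mul 20)
      ((ae_restrict_iff' measurableSet_Ioi).2 (ae_of_all _ fun s hs => aux_pw2 hα0 hα1 θ hs))
    have hgval : (∫ s in Ioi (0:ℝ), 20 * Real.exp ((α-1)*s)) = 20 * (1/(1-α)) := by
      rw [integral_const_mul, hIeval]
    rw [hgval] at hmono
    rw [h28]
    nlinarith
  · -- third integral
    have hb0 : (0:ℝ) ≤ Real.sqrt (1 - Real.cos θ) := Real.sqrt_nonneg _
    obtain ⟨hcint, hcval⟩ := aux_cauchy hb0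
    have hcIoi : (∫ s in Ioi (0:ℝ), Real.sqrt (1 - Real.cos θ) / (s^2 + 2*Real.sqrt (1 - Real.cos θ)^2)) ≤ π := by
      refine le_trans (setIntegral_le_integral hcint (ae_of_all _ fun s => ?_)) hcval
      positivity
    have hgint : IntegrableOn (fun s : ℝ => 6 * (Real.sqrt (1 - Real.cos θ) / (s^2 + 2*Real.sqrt (1 - Real.cos θ)^2)) + 8 * Real.exp ((α-1)*s)) (Ioi 0) :=
      (hcint.integrableOn.const_mul 6).add (hIe.const_mul 8)
    have hfnn : (0:ℝ → ℝ) ≤ᵐ[volume.restrict (Ioi 0)]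
        (fun s => |Real.sin θ| * Real.cosh (α * s) / (Real.cosh s - Real.cos θ)) :=
      ae_of_all _ fun s => div_nonneg (by positivity)
        (by linarith [Real.one_le_cosh s, Real.cos_le_one θ])
    have hfg : (fun s => |Real.sin θ| * Real.cosh (α * s) / (Real.cosh s - Real.cos θ))
        ≤ᵐ[volume.restrict (Ioi 0)]
        (fun s : ℝ => 6 * (Real.sqrt (1 - Real.cos θ) / (s^2 + 2*Real.sqrt (1 - Real.cos θ)^2)) + 8 * Real.exp ((α-1)*s)) :=
      (ae_restrict_iff' measurableSet_Ioi).2 (ae_of_all _ fun s hs => aux_pw3 hα0 hα1 θ hs)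
    have hmono := integral_mono_of_nonneg hfnn hgint hfg
    have hgval : (∫ s in Ioi (0:ℝ), (6 * (Real.sqrt (1 - Real.cos θ) / (s^2 + 2*Real.sqrt (1 - Real.cos θ)^2)) + 8 * Real.exp ((α-1)*s)))
        = 6 * (∫ s in Ioi (0:ℝ), Real.sqrt (1 - Real.cos θ) / (s^2 + 2*Real.sqrt (1 - Real.cos θ)^2)) + 8 * (1/(1-α)) := by
      rw [integral_add (hcint.integrableOn.const_mul 6) (hIe.const_mul 8),
        integral_const_mul, integral_const_mul, hIeval]
    rw [hgval] at hmono
    rw [h28]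
    nlinarith
end
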